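/- arXiv:2605.29255 — 4 statements merged into one kernel-verified Lean document; each statement's English description precedes it below -/
import Mathlib

section
/- Assume the conditional expectation of X given Y is linear: E[X − μ_X | σ(Y)] = Σ_XY σ_Y^{-2} (Y − μ_Y) almost surely. Then the conditional prediction bias satisfies E[Ŷ^OLS − Y | σ(Y)] = (η_OLS − 1)(Y − μ_Y) almost surely. In particular, if η_OLS < 1, then E[Ŷ^OLS − Y | σ(Y)] < 0 almost surely on the event {Y > μ_Y} and E[Ŷ^OLS − Y | σ(Y)] > 0 almost surely on the event {Y < μ_Y}. -/
/-!
Conditional expectation given `σ(Y)` is linear and fixes `Y - μ_Y`, so the linearity hypothesis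
gives `E[Ŷ - Y | σ(Y)] = (∑ᵢ βᵢ Σ_XY,i / σ_Y² - 1)(Y - μ_Y)`, and with `β = Σ_XX⁻¹ Σ_XY` the
coefficient `β ⬝ᵥ Σ_XY / σ_Y²` is `η_OLS`. The sign statements follow pointwise.
-/

open MeasureTheory ProbabilityTheory Matrix

/-- Population covariance of two real random variables. -/
noncomputable def covar {Ω : Type*} {mΩ : MeasurableSpace Ω} (μ : Measure Ω) (f g : Ω → ℝ) : ℝ :=
  ∫ ω, (f ω - ∫ ω', f ω' ∂μ) * (g ω - ∫ ω', g ω' ∂μ) ∂μ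

section CondExpLinear

variable {ι Ω : Type*} {m m₀ : MeasurableSpace Ω} {μ : Measure Ω}

theorem condExp_finsetSum_smul_ae_eq {E : Type*} [NormedAddCommGroup E] [NormedSpace ℝ E]
    [CompleteSpace E] {s : Finset ι} {f g : ι → Ω → E} (c : ι → ℝ)
    (hf : ∀ i ∈ s, Integrable (f i) μ) (hfg : ∀ i ∈ s, μ[f i | m] =ᵐ[μ] g i) :
    μ[fun ω => ∑ i ∈ s, c i • f i ω | m] =ᵐ[μ] fun ω => ∑ i ∈ s, c i • g i ω := by
  have hsum : (fun ω => ∑ i ∈ s, c i • f i ω) = ∑ i ∈ s, c i • f i := by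
    ext ω; simp
  have hterms : ∀ᵐ ω ∂μ, ∀ i ∈ s, μ[c i • f i | m] ω = c i • g i ω := by
    refine (Filter.eventually_all_finset s).2 fun i hi => ?_
    filter_upwards [condExp_smul (c i) (f i) m, hfg i hi] with ω hsmul hω
    rw [hsmul, Pi.smul_apply, hω]
  rw [hsum]
  filter_upwards [condExp_finsetSum (fun i hi => (hf i hi).smul (c i)) m, hterms] with ω hω hi
  rw [hω, Finset.sum_apply]
  exact Finset.sum_congr rfl hi

theorem condExp_sum_mul_sub_ae_eq [Fintype ι] (hm : m ≤ m₀) [SigmaFinite (μ.trim hm)]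
    {Z : ι → Ω → ℝ} {W : Ω → ℝ} (β a : ι → ℝ)
    (hZ : ∀ i, Integrable (Z i) μ) (hW : Integrable W μ) (hWm : StronglyMeasurable[m] W)
    (hZW : ∀ i, μ[Z i | m] =ᵐ[μ] fun ω => a i * W ω) :
    μ[fun ω => ∑ i, β i * Z i ω - W ω | m] =ᵐ[μ] fun ω => (∑ i, β i * a i - 1) * W ω := by
  have hpred := condExp_finsetSum_smul_ae_eq (s := Finset.univ) β (fun i _ => hZ i)
    (fun i _ => hZW i)
  have hpred_int : Integrable (fun ω => ∑ i, β i * Z i ω) μ :=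
    integrable_finsetSum _ fun i _ => (hZ i).const_mul (β i)
  filter_upwards [condExp_sub hpred_int hW m, hpred] with ω hsub hω
  simp only [smul_eq_mul] at hω
  rw [show (fun ω => ∑ i, β i * Z i ω - W ω) = (fun ω => ∑ i, β i * Z i ω) - W from rfl, hsub,
    Pi.sub_apply, hω, condExp_of_stronglyMeasurable hm hWm hW, sub_one_mul, Finset.sum_mul]
  simp only [mul_assoc]

end CondExpLinear

/-- Under linearity of `E[X − μ_X | σ(Y)]`, the conditional prediction bias
satisfies `E[Ŷ^OLS − Y | σ(Y)] = (η_OLS − 1)(Y − μ_Y)` a.s.; in particular if `η_OLS < 1`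
it is negative a.s. on `{Y > μ_Y}` and positive a.s. on `{Y < μ_Y}`. -/
theorem ols_conditional_prediction_bias
    {p : ℕ} {Ω : Type*} [MeasurableSpace Ω] (μ : Measure Ω) [IsProbabilityMeasure μ]
    (X : Ω → Fin p → ℝ) (Y : Ω → ℝ)
    (hXL2 : ∀ i, MemLp (fun ω => X ω i) 2 μ) (hYL2 : MemLp Y 2 μ)
    (hYmeas : Measurable Y)
    (μX : Fin p → ℝ) (hμX : ∀ i, μX i = ∫ ω, X ω i ∂μ)
    (μY : ℝ) (hμY : μY = ∫ ω, Y ω ∂μ)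
    (SXX : Matrix (Fin p) (Fin p) ℝ)
    (hSXX : ∀ i j, SXX i j = covar μ (fun ω => X ω i) (fun ω => X ω j))
    (hXXinv : IsUnit SXX.det)
    (SXY : Fin p → ℝ) (hSXY : ∀ i, SXY i = covar μ (fun ω => X ω i) Y)
    (σY2 : ℝ) (hσY2 : σY2 = variance Y μ) (hσY2pos : 0 < σY2)
    (βOLS : Fin p → ℝ) (hβ : βOLS = SXX⁻¹ *ᵥ SXY)
    (Yhat : Ω → ℝ) (hYhat : ∀ ω, Yhat ω = μY + ∑ i, (X ω i - μX i) * βOLS i)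
    (η : ℝ) (hη : η = (SXY ⬝ᵥ (SXX⁻¹ *ᵥ SXY)) / σY2)
    (mY : MeasurableSpace Ω) (hmY : mY = MeasurableSpace.comap Y inferInstance)
    (hlin : ∀ i, μ[(fun ω => X ω i - μX i) | mY]
        =ᵐ[μ] fun ω => SXY i / σY2 * (Y ω - μY)) :
    (μ[(fun ω => Yhat ω - Y ω) | mY] =ᵐ[μ] fun ω => (η - 1) * (Y ω - μY)) ∧
    (η < 1 →
      ∀ᵐ ω ∂μ,
        (μY < Y ω → (μ[(fun ω' => Yhat ω' - Y ω') | mY]) ω < 0) ∧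
        (Y ω < μY → 0 < (μ[(fun ω' => Yhat ω' - Y ω') | mY]) ω)) := by
  subst hmY
  have hη_sum : ∑ i, βOLS i * (SXY i / σY2) = η := by
    rw [hη, hβ, dotProduct, Finset.sum_div]
    exact Finset.sum_congr rfl fun i _ => by ring
  have hbias_eq : (fun ω => Yhat ω - Y ω)
      = fun ω => ∑ i, βOLS i * (X ω i - μX i) - (Y ω - μY) := by
    funext ω
    simp only [hYhat, mul_comm (βOLS _)]
    ring
  have hbias : μ[(fun ω => Yhat ω - Y ω) | MeasurableSpace.comap Y inferInstance]
      =ᵐ[μ] fun ω => (η - 1) * (Y ω - μY) := by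
    rw [hbias_eq, ← hη_sum]
    exact condExp_sum_mul_sub_ae_eq hYmeas.comap_le (Z := fun i ω => X ω i - μX i) _ _
      (fun i => ((hXL2 i).integrable one_le_two).sub (integrable_const _))
      ((hYL2.integrable one_le_two).sub (integrable_const _))
      ((comap_measurable Y).stronglyMeasurable.sub stronglyMeasurable_const) hlin
  refine ⟨hbias, fun hη_lt => ?_⟩
  filter_upwards [hbias] with ω hω
  rw [hω]
  exact ⟨fun hY => mul_neg_of_neg_of_pos (by linarith) (by linarith),
    fun hY => mul_pos_of_neg_of_neg (by linarith) (by linarith)⟩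
end

section
/- (Downstream unbiasedness in regressing Ŷ^OCR on W.) Let Ŷ be a square-integrable random variable satisfying the outcome-calibration condition E[Ŷ | σ(Y)] = Y almost surely, and suppose W and Ŷ − Y are conditionally independent given σ(Y). Assume Var(W) > 0. Then Cov(Ŷ, W) = Cov(Y, W), and hence the population regression coefficient of Ŷ on W recovers the true coefficient: Cov(Ŷ, W)/Var(W) = Cov(Y, W)/Var(W) = θ. -/
/-!
Write `D = Ŷ - Y`. Calibration says `E[D | σ(Y)] = 0`, and conditional independence of `W` and
`D` given `σ(Y)` factorises `E[W D | σ(Y)] = E[W | σ(Y)] E[D | σ(Y)] = 0`. Hence `D` is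
uncorrelated with `W`, and bilinearity of the covariance gives `Cov(Ŷ, W) = Cov(Y, W)`.
The factorisation is checked fibrewise: conditional independence is independence under the
conditional expectation kernel `κ ω` for almost every `ω`, where the product rule for integrals
of independent variables applies.
-/

open MeasureTheory ProbabilityTheory Set

lemma covar_eq_covariance {Ω : Type*} {mΩ : MeasurableSpace Ω} (μ : Measure Ω) (f g : Ω → ℝ) :
    covar μ f g = cov[f, g; μ] :=
  rfl

/-- Only the countably many rational half-lines need to be tested, as they generate the Borel
σ-algebra; so the exceptional null sets can be collected into one. -/
lemma ProbabilityTheory.Kernel.IndepFun.ae_indepFun {α Ω : Type*} {mα : MeasurableSpace α}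
    {mΩ : MeasurableSpace Ω} {κ : Kernel α Ω} [IsMarkovKernel κ] {μ : Measure α}
    {f g : Ω → ℝ} (hf : Measurable f) (hg : Measurable g) (h : Kernel.IndepFun f g κ μ) :
    ∀ᵐ a ∂μ, ProbabilityTheory.IndepFun f g (κ a) := by
  rw [Kernel.indepFun_iff_measure_inter_preimage_eq_mul] at h
  have h_rat : ∀ᵐ a ∂μ, ∀ q r : ℚ, κ a (f ⁻¹' Iic (q : ℝ) ∩ g ⁻¹' Iic (r : ℝ))
      = κ a (f ⁻¹' Iic (q : ℝ)) * κ a (g ⁻¹' Iic (r : ℝ)) := by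
    simp only [ae_all_iff]
    exact fun q r => h _ _ measurableSet_Iic measurableSet_Iic
  filter_upwards [h_rat] with a ha
  have h_gen : ∀ φ : Ω → ℝ, MeasurableSpace.comap φ inferInstance
      = MeasurableSpace.generateFrom (preimage φ '' ⋃ q : ℚ, {Iic (q : ℝ)}) := by
    intro φ
    rw [BorelSpace.measurable_eq (α := ℝ), Real.borel_eq_generateFrom_Iic_rat,
      MeasurableSpace.comap_generateFrom]
  refine IndepSets.indep hf.comap_le hg.comap_le (Real.isPiSystem_Iic_rat.comap f)
    (Real.isPiSystem_Iic_rat.comap g) (h_gen f) (h_gen g) ?_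
  rintro _ _ ⟨_, hs, rfl⟩ ⟨_, ht, rfl⟩
  simp only [mem_iUnion, mem_singleton_iff] at hs ht
  obtain ⟨q, rfl⟩ := hs
  obtain ⟨r, rfl⟩ := ht
  exact .of_forall fun _ => ha q r

section CondExpKernel

variable {Ω : Type*} {m : MeasurableSpace Ω} [mΩ : MeasurableSpace Ω] [StandardBorelSpace Ω]
  {μ : Measure Ω}

lemma ae_trim_ae_condExpKernel_of_ae [IsFiniteMeasure μ] (hm : m ≤ mΩ) {p : Ω → Prop}
    (h : ∀ᵐ ω ∂μ, p ω) :
    ∀ᵐ ω ∂μ.trim hm, ∀ᵐ ω' ∂condExpKernel μ m ω, p ω' :=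
  Measure.ae_ae_of_ae_comp (by rwa [condExpKernel_comp_trim hm])

lemma ProbabilityTheory.CondIndepFun.condExp_mul [IsFiniteMeasure μ] (hm : m ≤ mΩ) {f g : Ω → ℝ}
    (hfg : CondIndepFun m hm f g μ) (hf : Integrable f μ) (hg : Integrable g μ)
    (hfg_int : Integrable (f * g) μ) :
    μ[f * g | m] =ᵐ[μ] μ[f | m] * μ[g | m] := by
  set κ := condExpKernel μ m
  set f' := hf.1.mk f
  set g' := hg.1.mk g
  have hf' : f =ᵐ[μ] f' := hf.1.ae_eq_mk
  have hg' : g =ᵐ[μ] g' := hg.1.ae_eq_mk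
  have hf'_meas : Measurable f' := hf.1.stronglyMeasurable_mk.measurable
  have hg'_meas : Measurable g' := hg.1.stronglyMeasurable_mk.measurable
  have h_indep : ∀ᵐ ω ∂μ, IndepFun f' g' (κ ω) :=
    ae_of_ae_trim hm <| Kernel.IndepFun.ae_indepFun hf'_meas hg'_meas <|
      hfg.congr' (ae_trim_ae_condExpKernel_of_ae hm hf') (ae_trim_ae_condExpKernel_of_ae hm hg')
  calc μ[f * g | m]
      =ᵐ[μ] μ[f' * g' | m] := condExp_congr_ae (hf'.mul hg')
    _ =ᵐ[μ] fun ω => ∫ y, (f' * g') y ∂κ ω :=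
      condExp_ae_eq_integral_condExpKernel hm (hfg_int.congr (hf'.mul hg'))
    _ =ᵐ[μ] fun ω => (∫ y, f' y ∂κ ω) * ∫ y, g' y ∂κ ω := by
      filter_upwards [h_indep] with ω hω
      exact hω.integral_mul_eq_mul_integral hf'_meas.aestronglyMeasurable
        hg'_meas.aestronglyMeasurable
    _ =ᵐ[μ] μ[f' | m] * μ[g' | m] :=
      ((condExp_ae_eq_integral_condExpKernel hm (hf.congr hf')).mul
        (condExp_ae_eq_integral_condExpKernel hm (hg.congr hg'))).symm
    _ =ᵐ[μ] μ[f | m] * μ[g | m] := (condExp_congr_ae hf').symm.mul (condExp_congr_ae hg').symm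

lemma ProbabilityTheory.CondIndepFun.covariance_eq_zero [IsProbabilityMeasure μ] (hm : m ≤ mΩ)
    {f g : Ω → ℝ} (hfg : CondIndepFun m hm f g μ) (hf : MemLp f 2 μ) (hg : MemLp g 2 μ)
    (hg_condExp : μ[g | m] =ᵐ[μ] 0) :
    cov[f, g; μ] = 0 := by
  have h_integral_g : μ[g] = 0 := by
    rw [← integral_condExp hm, integral_congr_ae hg_condExp]
    simp
  have h_condExp_mul : μ[f * g | m] =ᵐ[μ] 0 := by
    filter_upwards [hfg.condExp_mul hm (hf.integrable one_le_two) (hg.integrable one_le_two)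
      (hf.integrable_mul hg), hg_condExp] with ω hω hω_g
    simp [hω, hω_g]
  have h_integral_mul : μ[f * g] = 0 := by
    rw [← integral_condExp hm, integral_congr_ae h_condExp_mul]
    simp
  rw [covariance_eq_sub hf hg, h_integral_mul, h_integral_g, mul_zero, sub_zero]

end CondExpKernel

theorem ocr_downstream_unbiasedness_general
    {Ω : Type*} [m0 : MeasurableSpace Ω] [StandardBorelSpace Ω]
    (μ : Measure Ω) [IsProbabilityMeasure μ]
    (Y W Yhat : Ω → ℝ)
    (hYL2 : MemLp Y 2 μ) (hWL2 : MemLp W 2 μ) (hYhatL2 : MemLp Yhat 2 μ)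
    (mY : MeasurableSpace Ω) (hmY : mY = MeasurableSpace.comap Y inferInstance)
    (hmY_le : mY ≤ m0)
    (hcal : μ[Yhat | mY] =ᵐ[μ] Y)
    (hcondindep : CondIndepFun (mΩ := m0) mY hmY_le W (fun ω => Yhat ω - Y ω) μ)
    (θ : ℝ) (hθ : θ = covar μ Y W / variance W μ) :
    covar μ Yhat W = covar μ Y W ∧ covar μ Yhat W / variance W μ = θ := by
  have hY_condExp : μ[Y | mY] = Y := by
    have hY_meas : StronglyMeasurable[mY] Y := by
      rw [hmY]
      exact (comap_measurable Y).stronglyMeasurable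
    exact condExp_of_stronglyMeasurable hmY_le hY_meas (hYL2.integrable one_le_two)
  have hD_condExp : μ[Yhat - Y | mY] =ᵐ[μ] 0 := by
    filter_upwards [condExp_sub (hYhatL2.integrable one_le_two) (hYL2.integrable one_le_two) mY,
      hcal] with ω hω hω_cal
    simp [hω, hY_condExp, hω_cal]
  -- `mY` is a local instance too, so the ambient σ-algebra has to be named.
  have h_uncorrelated : cov[W, Yhat - Y; μ] = 0 :=
    hcondindep.covariance_eq_zero (mΩ := m0) hmY_le hWL2 (hYhatL2.sub hYL2) hD_condExp
  have h_covar : covar μ Yhat W = covar μ Y W := by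
    rw [covariance_comm, covariance_sub_left hYhatL2 hYL2 hWL2, sub_eq_zero] at h_uncorrelated
    simpa only [covar_eq_covariance] using h_uncorrelated
  exact ⟨h_covar, by rw [h_covar, hθ]⟩

/-- Downstream unbiasedness in regressing `Ŷ^OCR` on `W`: if `Ŷ` is
square-integrable with `E[Ŷ | σ(Y)] = Y` a.s. (outcome calibration), `W` and `Ŷ − Y` are
conditionally independent given `σ(Y)`, and `Var(W) > 0`, then `Cov(Ŷ, W) = Cov(Y, W)` and
hence `Cov(Ŷ, W)/Var(W) = Cov(Y, W)/Var(W) = θ`. -/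
theorem ocr_downstream_unbiasedness
    {Ω : Type*} [m0 : MeasurableSpace Ω] [StandardBorelSpace Ω]
    (μ : Measure Ω) [IsProbabilityMeasure μ]
    (Y W Yhat : Ω → ℝ)
    (hYL2 : MemLp Y 2 μ) (hWL2 : MemLp W 2 μ) (hYhatL2 : MemLp Yhat 2 μ)
    (hYmeas : Measurable Y)
    (mY : MeasurableSpace Ω) (hmY : mY = MeasurableSpace.comap Y inferInstance)
    (hmY_le : mY ≤ m0)
    (hcal : μ[Yhat | mY] =ᵐ[μ] Y)
    (hcondindep : CondIndepFun (mΩ := m0) mY hmY_le W (fun ω => Yhat ω - Y ω) μ)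
    (hVarW : 0 < variance W μ)
    (θ : ℝ) (hθ : θ = covar μ Y W / variance W μ) :
    covar μ Yhat W = covar μ Y W ∧ covar μ Yhat W / variance W μ = θ :=
  ocr_downstream_unbiasedness_general (m0 := m0) μ Y W Yhat hYL2 hWL2 hYhatL2 mY hmY hmY_le hcal
    hcondindep θ hθ
end

section
/- (Cross-term lemma for constrained Gauss–Markov.) Let D ∈ ℝ^{p×n} and e ∈ ℝ^p satisfy D X β + e = 0 for every β ∈ ℝ^p with Aβ = c. Then L_OCR D^T = 0, where L_OCR = (I − K A)(X^T X)^{-1} X^T. -/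
open Matrix

/-- Cross-term lemma for constrained Gauss–Markov: if `D ∈ ℝ^{p×n}` and
`e ∈ ℝ^p` satisfy `D X β + e = 0` for every feasible `β` (with `Aβ = c`), then
`L_OCR Dᵀ = 0`, where `L_OCR = (I − K A)(XᵀX)⁻¹Xᵀ`. -/
theorem ocr_cross_term_vanishes
    {n p : ℕ} (hn : 0 < n) (hp : 0 < p)
    (X : Matrix (Fin n) (Fin p) ℝ)
    (A : Matrix (Fin 2) (Fin p) ℝ) (c : Fin 2 → ℝ)
    (hX : IsUnit (Xᵀ * X).det)
    (hArank : A.rank = 2)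
    (hA : IsUnit (A * (Xᵀ * X)⁻¹ * Aᵀ).det)
    (K : Matrix (Fin p) (Fin 2) ℝ)
    (hK : K = (Xᵀ * X)⁻¹ * Aᵀ * (A * (Xᵀ * X)⁻¹ * Aᵀ)⁻¹)
    (LOCR : Matrix (Fin p) (Fin n) ℝ)
    (hLOCR : LOCR = (1 - K * A) * (Xᵀ * X)⁻¹ * Xᵀ)
    (D : Matrix (Fin p) (Fin n) ℝ) (e : Fin p → ℝ)
    (hDe : ∀ β : Fin p → ℝ, A *ᵥ β = c → D *ᵥ (X *ᵥ β) + e = 0) :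
    LOCR * Dᵀ = 0 := by
  have hsym : ((Xᵀ * X)⁻¹)ᵀ = (Xᵀ * X)⁻¹ := by
    rw [Matrix.transpose_nonsing_inv, Matrix.transpose_mul, Matrix.transpose_transpose]
  have hAK : A * K = 1 := by
    rw [hK, ← Matrix.mul_assoc, ← Matrix.mul_assoc, Matrix.mul_nonsing_inv _ hA]
  set M : Matrix (Fin p) (Fin p) ℝ := (Xᵀ * X)⁻¹ * (1 - Aᵀ * Kᵀ) with hM
  have hKT : Kᵀ = (A * (Xᵀ * X)⁻¹ * Aᵀ)⁻¹ * (A * (Xᵀ * X)⁻¹) := by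
    rw [hK]
    simp [Matrix.transpose_mul, Matrix.transpose_nonsing_inv, hsym, Matrix.mul_assoc]
  have hAM : A * M = 0 := by
    rw [hM, ← Matrix.mul_assoc, Matrix.mul_sub, Matrix.mul_one, hKT,
      ← Matrix.mul_assoc, ← Matrix.mul_assoc, Matrix.mul_assoc (A * (Xᵀ * X)⁻¹ * Aᵀ),
      ← Matrix.mul_assoc (A * (Xᵀ * X)⁻¹ * Aᵀ), Matrix.mul_nonsing_inv _ hA,
      Matrix.one_mul, sub_self]
  have hβ0 : A *ᵥ (K *ᵥ c) = c := by
    rw [Matrix.mulVec_mulVec, hAK, Matrix.one_mulVec]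
  have key : ∀ v : Fin p → ℝ, A *ᵥ v = 0 → D *ᵥ (X *ᵥ v) = 0 := by
    intro v hv
    have h1 := hDe (K *ᵥ c) hβ0
    have h2 := hDe (K *ᵥ c + v) (by rw [Matrix.mulVec_add, hβ0, hv, add_zero])
    rw [Matrix.mulVec_add, Matrix.mulVec_add] at h2
    have h3 : D *ᵥ (X *ᵥ v) =
        (D *ᵥ (X *ᵥ (K *ᵥ c)) + D *ᵥ (X *ᵥ v) + e) - (D *ᵥ (X *ᵥ (K *ᵥ c)) + e) := by
      abel
    rw [h3, h2, h1, sub_zero]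
  have hDXM : D * (X * M) = 0 := by
    ext i j
    have hcol : A *ᵥ (fun k => M k j) = 0 := by
      ext l
      have h4 : (A *ᵥ fun k => M k j) l = (A * M) l j := by
        simp [Matrix.mulVec, Matrix.mul_apply, dotProduct]
      rw [h4, hAM]
      rfl
    have hk := key (fun k => M k j) hcol
    have h5 : (D * (X * M)) i j = (D *ᵥ (X *ᵥ fun k => M k j)) i := by
      simp [Matrix.mul_apply, Matrix.mulVec, dotProduct]
    rw [h5, hk]
    rfl
  have hL : LOCR = (X * M)ᵀ := by
    rw [hLOCR, hM]
    simp [Matrix.transpose_mul, Matrix.transpose_sub, hsym, Matrix.mul_assoc]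
  calc LOCR * Dᵀ = (D * (X * M))ᵀ := by rw [hL, ← Matrix.transpose_mul]
    _ = 0 := by rw [hDXM, Matrix.transpose_zero]
end

section
/- (Constrained Gauss–Markov theorem.) Under the linear model y = Xβ + ε with E[ε] = 0 and Var(ε) = σ² I, among all linear estimators β̃ = L y + m (L ∈ ℝ^{p×n}, m ∈ ℝ^p) that are unbiased for every β in the feasible set F = {β : Aβ = c} (i.e., L X β + m = β for all β ∈ F), the OCR estimator β̂^OCR = L_OCR y + K c has minimum variance: Var(β̃) − Var(β̂^OCR) = σ² (L L^T − L_OCR L_OCR^T) is positive semidefinite. Equivalently, in matrix form: if L X β + m = β for all β with Aβ = c, then L L^T − L_OCR L_OCR^T ⪰ 0. -/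
open Matrix

/-- Constrained Gauss–Markov theorem: among all linear estimators
`β̃ = L y + m` that are unbiased for every `β` in the feasible set `{β : Aβ = c}`
(i.e. `L X β + m = β` whenever `Aβ = c`), the OCR estimator `β̂^OCR = L_OCR y + K c`
has minimum variance: `L Lᵀ − L_OCR L_OCRᵀ` is positive semidefinite. -/
theorem constrained_gauss_markov
    {n p : ℕ} (hn : 0 < n) (hp : 0 < p)
    (X : Matrix (Fin n) (Fin p) ℝ)
    (A : Matrix (Fin 2) (Fin p) ℝ) (c : Fin 2 → ℝ)
    (hX : IsUnit (Xᵀ * X).det)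
    (hArank : A.rank = 2)
    (hA : IsUnit (A * (Xᵀ * X)⁻¹ * Aᵀ).det)
    (K : Matrix (Fin p) (Fin 2) ℝ)
    (hK : K = (Xᵀ * X)⁻¹ * Aᵀ * (A * (Xᵀ * X)⁻¹ * Aᵀ)⁻¹)
    (LOCR : Matrix (Fin p) (Fin n) ℝ)
    (hLOCR : LOCR = (1 - K * A) * (Xᵀ * X)⁻¹ * Xᵀ)
    (L : Matrix (Fin p) (Fin n) ℝ) (m : Fin p → ℝ)
    (hunbiased : ∀ β : Fin p → ℝ, A *ᵥ β = c → L *ᵥ (X *ᵥ β) + m = β) :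
    (L * Lᵀ - LOCR * LOCRᵀ).PosSemidef := by
  set S : Matrix (Fin p) (Fin p) ℝ := (Xᵀ * X)⁻¹ with hS
  set B : Matrix (Fin 2) (Fin 2) ℝ := A * S * Aᵀ with hB
  have hBB : B⁻¹ * B = 1 := Matrix.nonsing_inv_mul _ hA
  have hBB' : B * B⁻¹ = 1 := Matrix.mul_nonsing_inv _ hA
  have hSX : S * (Xᵀ * X) = 1 := Matrix.nonsing_inv_mul _ hX
  have hSsym : Sᵀ = S := by
    rw [hS, Matrix.transpose_nonsing_inv, Matrix.transpose_mul, Matrix.transpose_transpose]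
  have hAK : A * K = 1 := by
    rw [hK]
    calc A * (S * Aᵀ * B⁻¹) = (A * S * Aᵀ) * B⁻¹ := by
          simp only [Matrix.mul_assoc]
      _ = 1 := hBB'
  have hKey : (1 - K * A) * (S * Aᵀ) = 0 := by
    have : K * (A * (S * Aᵀ)) = S * Aᵀ := by
      rw [hK]
      calc S * Aᵀ * B⁻¹ * (A * (S * Aᵀ)) = S * Aᵀ * (B⁻¹ * B) := by
            rw [hB]; simp only [Matrix.mul_assoc]
        _ = S * Aᵀ := by rw [hBB, Matrix.mul_one]
    rw [Matrix.sub_mul, Matrix.one_mul, Matrix.mul_assoc, this, sub_self]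
  have hKey2 : ∀ {q : Type} [Fintype q] (Y : Matrix (Fin 2) q ℝ),
      (1 - K * A) * (S * (Aᵀ * Y)) = 0 := by
    intro q _ Y
    calc (1 - K * A) * (S * (Aᵀ * Y)) = ((1 - K * A) * (S * Aᵀ)) * Y := by
          simp only [Matrix.mul_assoc]
      _ = 0 := by rw [hKey, Matrix.zero_mul]
  -- unbiasedness ⇒ (L*X - 1) vanishes on ker A
  have hker : ∀ w : Fin p → ℝ, A *ᵥ w = 0 → (L * X - 1) *ᵥ w = 0 := by
    intro w hw
    have hc0 : A *ᵥ (K *ᵥ c) = c := by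
      rw [Matrix.mulVec_mulVec, hAK, Matrix.one_mulVec]
    have h1 := hunbiased (K *ᵥ c) hc0
    have h2 := hunbiased (K *ᵥ c + w) (by rw [Matrix.mulVec_add, hw, add_zero, hc0])
    have h3 : L *ᵥ (X *ᵥ w) = w := by
      rw [Matrix.mulVec_add, Matrix.mulVec_add] at h2
      have h4 : (L *ᵥ (X *ᵥ (K *ᵥ c)) + m) + L *ᵥ (X *ᵥ w) = K *ᵥ c + w := by
        rw [← h2]; abel
      rw [h1] at h4
      exact add_left_cancel h4
    rw [Matrix.sub_mulVec, Matrix.one_mulVec, ← Matrix.mulVec_mulVec, h3, sub_self]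
  -- hence (L*X - 1) * (1 - K*A) = 0
  have hzero : (L * X - 1) * (1 - K * A) = 0 := by
    ext i j
    have hv : A *ᵥ ((1 - K * A) *ᵥ Pi.single j 1) = 0 := by
      rw [Matrix.mulVec_mulVec]
      have : A * (1 - K * A) = 0 := by
        rw [Matrix.mul_sub, Matrix.mul_one, ← Matrix.mul_assoc, hAK, Matrix.one_mul, sub_self]
      rw [this, Matrix.zero_mulVec]
    have h := hker _ hv
    rw [Matrix.mulVec_mulVec] at h
    have := congrFun h i
    simpa using this
  obtain ⟨M, hM⟩ : ∃ M : Matrix (Fin p) (Fin 2) ℝ, L * X = 1 + M * A := by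
    refine ⟨(L * X - 1) * K, ?_⟩
    rw [Matrix.mul_sub, Matrix.mul_one] at hzero
    have h := sub_eq_zero.mp hzero
    rw [Matrix.mul_assoc, ← h]
    abel
  have hXL : Xᵀ * Lᵀ = 1 + Aᵀ * Mᵀ := by
    rw [show Xᵀ * Lᵀ = (L * X)ᵀ from (Matrix.transpose_mul L X).symm, hM,
      Matrix.transpose_add, Matrix.transpose_one, Matrix.transpose_mul]
  -- cross term
  have hcross : LOCR * Lᵀ = (1 - K * A) * S := by
    rw [hLOCR]
    calc (1 - K * A) * S * Xᵀ * Lᵀ = (1 - K * A) * (S * (Xᵀ * Lᵀ)) := by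
          simp only [Matrix.mul_assoc]
      _ = (1 - K * A) * S + (1 - K * A) * (S * (Aᵀ * Mᵀ)) := by
          rw [hXL, Matrix.mul_add, Matrix.mul_one, Matrix.mul_add]
      _ = (1 - K * A) * S := by rw [hKey2, add_zero]
  have hself : LOCR * LOCRᵀ = (1 - K * A) * S := by
    have hT : LOCRᵀ = X * (S * (1 - K * A)ᵀ) := by
      rw [hLOCR, Matrix.transpose_mul, Matrix.transpose_mul, Matrix.transpose_transpose, hSsym]
    rw [hT, hLOCR]
    calc (1 - K * A) * S * Xᵀ * (X * (S * (1 - K * A)ᵀ))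
        = (1 - K * A) * ((S * (Xᵀ * X)) * (S * (1 - K * A)ᵀ)) := by
          simp only [Matrix.mul_assoc]
      _ = (1 - K * A) * (S * (1 - K * A)ᵀ) := by rw [hSX, Matrix.one_mul]
      _ = (1 - K * A) * S - (1 - K * A) * (S * (Aᵀ * Kᵀ)) := by
          rw [Matrix.transpose_sub, Matrix.transpose_one, Matrix.transpose_mul,
            Matrix.mul_sub S, Matrix.mul_one, Matrix.mul_sub]
      _ = (1 - K * A) * S := by rw [hKey2, sub_zero]
  have hsymS : ((1 - K * A) * S)ᵀ = (1 - K * A) * S := by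
    rw [← hself, Matrix.transpose_mul, Matrix.transpose_transpose, hself]
  have hLLOCR : L * LOCRᵀ = (1 - K * A) * S := by
    have h1 : (LOCR * Lᵀ)ᵀ = L * LOCRᵀ := by
      rw [Matrix.transpose_mul, Matrix.transpose_transpose]
    rw [← h1, hcross, hsymS]
  have hmain : L * Lᵀ - LOCR * LOCRᵀ = (L - LOCR) * (L - LOCR)ᵀ := by
    rw [Matrix.transpose_sub, Matrix.mul_sub, Matrix.sub_mul, Matrix.sub_mul]
    rw [hcross, hLLOCR, hself]
    abel
  rw [hmain]
  have := Matrix.posSemidef_self_mul_conjTranspose (L - LOCR)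
  rwa [Matrix.conjTranspose_eq_transpose_of_trivial] at this
end
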